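/- arXiv:2511.23153 — 4 statements merged into one kernel-verified Lean document; each statement's English description precedes it below -/
import Mathlib

section
/- Let h, Z : ℝ³ → ℝ be differentiable functions of (t,x,y) and let ψ : ℝ⁴ → ℝ be a differentiable function of (t,x,y,z). Define the mapped function ψ̃(t,x,y,ζ) = ψ(t,x,y, ζ·h(t,x,y) + Z(t,x,y)). Then for every (t,x,y,ζ) ∈ ℝ⁴ and each coordinate s ∈ {t,x,y} one has h(t,x,y)·(∂_s ψ)(t,x,y, ζh+Z) = ∂_s[h ψ̃](t,x,y,ζ) − ∂_ζ[(ζ·∂_s h + ∂_s Z)·ψ̃](t,x,y,ζ), and h(t,x,y)·(∂_z ψ)(t,x,y, ζh+Z) = ∂_ζ ψ̃(t,x,y,ζ). -/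
/-!
With `z = ζ h + Z`, the chain rule gives `∂_ζ ψ̃ = h ∂_z ψ` and
`∂_s ψ̃ = ∂_s ψ + (ζ ∂_s h + ∂_s Z) ∂_z ψ`. The horizontal rule follows by substituting
the product rule for `∂_s (h ψ̃)` and `∂_ζ ((ζ ∂_s h + ∂_s Z) ψ̃)`: the terms `∂_s h · ψ̃`
and `(ζ ∂_s h + ∂_s Z) h ∂_z ψ` cancel. Each horizontal coordinate is handled separately,
freezing the other two, so everything reduces to a function of two real variables.
-/

section

variable {𝕜 F : Type*} [NontriviallyNormedField 𝕜] [NormedAddCommGroup F] [NormedSpace 𝕜 F]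

/-- Holds without differentiability of `f`, since `ζ ↦ ζ * a + b` is either constant or a
diffeomorphism. -/
theorem deriv_comp_mul_const_add_const (f : 𝕜 → F) (a b x : 𝕜) :
    deriv (fun x => f (x * a + b)) x = a • deriv f (x * a + b) := by
  calc deriv (fun x => f (x * a + b)) x
      = deriv ((fun w => f (w + b)) <| a * ·) x := by simp only [mul_comm _ a]
    _ = a • deriv (fun w => f (w + b)) (a * x) := deriv_comp_mul_left a (fun w => f (w + b)) x
    _ = a • deriv f (x * a + b) := by rw [deriv_comp_add_const, mul_comm]

theorem DifferentiableAt.hasDerivAt_comp_prodMk {f : 𝕜 × 𝕜 → F} {u v : 𝕜 → 𝕜}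
    {u' v' t : 𝕜} (hf : DifferentiableAt 𝕜 f (u t, v t)) (hu : HasDerivAt u u' t)
    (hv : HasDerivAt v v' t) :
    HasDerivAt (fun t => f (u t, v t))
      (u' • fderiv 𝕜 f (u t, v t) (1, 0) + v' • fderiv 𝕜 f (u t, v t) (0, 1)) t := by
  have hL : (u', v') = u' • ((1 : 𝕜), (0 : 𝕜)) + v' • ((0 : 𝕜), (1 : 𝕜)) := by simp
  have := hf.hasFDerivAt.comp_hasDerivAt t (hu.prodMk hv)
  rwa [hL, map_add, map_smul, map_smul] at this

theorem horizontal_mapping_rule {f : 𝕜 × 𝕜 → 𝕜} {H Z : 𝕜 → 𝕜} {s ζ : 𝕜}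
    (hf : DifferentiableAt 𝕜 f (s, ζ * H s + Z s)) (hH : DifferentiableAt 𝕜 H s)
    (hZ : DifferentiableAt 𝕜 Z s) :
    H s * deriv (fun s' => f (s', ζ * H s + Z s)) s
      = deriv (fun s' => H s' * f (s', ζ * H s' + Z s')) s
        - deriv (fun ζ' => (ζ' * deriv H s + deriv Z s) * f (s, ζ' * H s + Z s)) ζ := by
  set fs := fderiv 𝕜 f (s, ζ * H s + Z s) (1, 0)
  set fz := fderiv 𝕜 f (s, ζ * H s + Z s) (0, 1)
  have frozen : HasDerivAt (fun s' => f (s', ζ * H s + Z s)) fs s := by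
    simpa using hf.hasDerivAt_comp_prodMk (hasDerivAt_id s) (hasDerivAt_const s _)
  have moving : HasDerivAt (fun s' => f (s', ζ * H s' + Z s'))
      (fs + (ζ * deriv H s + deriv Z s) * fz) s := by
    simpa using hf.hasDerivAt_comp_prodMk (hasDerivAt_id s)
      ((hH.hasDerivAt.const_mul ζ).add hZ.hasDerivAt)
  have vertical : HasDerivAt (fun ζ' => f (s, ζ' * H s + Z s)) (H s * fz) ζ := by
    simpa using hf.hasDerivAt_comp_prodMk (hasDerivAt_const ζ s)
      (((hasDerivAt_id ζ).mul_const (H s)).add_const (Z s))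
  have flux : HasDerivAt (fun ζ' => ζ' * deriv H s + deriv Z s) (deriv H s) ζ := by
    simpa using ((hasDerivAt_id ζ).mul_const (deriv H s)).add_const (deriv Z s)
  have product : HasDerivAt (fun s' => H s' * f (s', ζ * H s' + Z s'))
      (deriv H s * f (s, ζ * H s + Z s) + H s * (fs + (ζ * deriv H s + deriv Z s) * fz)) s :=
    hH.hasDerivAt.mul moving
  have fluxProduct : HasDerivAt (fun ζ' => (ζ' * deriv H s + deriv Z s) * f (s, ζ' * H s + Z s))
      (deriv H s * f (s, ζ * H s + Z s) + (ζ * deriv H s + deriv Z s) * (H s * fz)) ζ :=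
    flux.mul vertical
  rw [frozen.deriv, product.deriv, fluxProduct.deriv]
  ring

end

/-- The differential transformation rules for the mapping of the
vertical coordinate `z ∈ [Z, h+Z]` to the normalized coordinate `ζ ∈ [0,1]`,
`z = ζ·h + Z`.  For a differentiable `ψ(t,x,y,z)` and its mapped counterpart
`ψ̃(t,x,y,ζ) = ψ(t,x,y, ζh+Z)`, one has for each `s ∈ {t,x,y}`:
`h·∂_s ψ = ∂_s(h ψ̃) − ∂_ζ[((ζ·∂_s h + ∂_s Z)·ψ̃)]` and `h·∂_z ψ = ∂_ζ ψ̃`. -/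
theorem mapping_differential_rules
    (h Z : ℝ × ℝ × ℝ → ℝ) (ψ : ℝ × ℝ × ℝ × ℝ → ℝ)
    (hdiff : Differentiable ℝ h) (Zdiff : Differentiable ℝ Z)
    (ψdiff : Differentiable ℝ ψ) :
    ∀ t x y ζ : ℝ,
      -- s = t
      (h (t, x, y) *
          deriv (fun t' => ψ (t', x, y, ζ * h (t, x, y) + Z (t, x, y))) t
        = deriv
            (fun t' => h (t', x, y) *
              ψ (t', x, y, ζ * h (t', x, y) + Z (t', x, y))) t
          - deriv
              (fun ζ' =>
                (ζ' * deriv (fun t' => h (t', x, y)) t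
                    + deriv (fun t' => Z (t', x, y)) t) *
                  ψ (t, x, y, ζ' * h (t, x, y) + Z (t, x, y))) ζ)
      ∧
      -- s = x
      (h (t, x, y) *
          deriv (fun x' => ψ (t, x', y, ζ * h (t, x, y) + Z (t, x, y))) x
        = deriv
            (fun x' => h (t, x', y) *
              ψ (t, x', y, ζ * h (t, x', y) + Z (t, x', y))) x
          - deriv
              (fun ζ' =>
                (ζ' * deriv (fun x' => h (t, x', y)) x
                    + deriv (fun x' => Z (t, x', y)) x) *
                  ψ (t, x, y, ζ' * h (t, x, y) + Z (t, x, y))) ζ)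
      ∧
      -- s = y
      (h (t, x, y) *
          deriv (fun y' => ψ (t, x, y', ζ * h (t, x, y) + Z (t, x, y))) y
        = deriv
            (fun y' => h (t, x, y') *
              ψ (t, x, y', ζ * h (t, x, y') + Z (t, x, y'))) y
          - deriv
              (fun ζ' =>
                (ζ' * deriv (fun y' => h (t, x, y')) y
                    + deriv (fun y' => Z (t, x, y')) y) *
                  ψ (t, x, y, ζ' * h (t, x, y) + Z (t, x, y))) ζ)
      ∧
      -- vertical rule
      (h (t, x, y) *
          deriv (fun z => ψ (t, x, y, z)) (ζ * h (t, x, y) + Z (t, x, y))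
        = deriv (fun ζ' => ψ (t, x, y, ζ' * h (t, x, y) + Z (t, x, y))) ζ) := by
  intro t x y ζ
  refine ⟨?_, ?_, ?_, ?_⟩
  · exact horizontal_mapping_rule (f := fun p => ψ (p.1, x, y, p.2))
      (H := fun t' => h (t', x, y)) (Z := fun t' => Z (t', x, y))
      (by fun_prop) (by fun_prop) (by fun_prop)
  · exact horizontal_mapping_rule (f := fun p => ψ (t, p.1, y, p.2))
      (H := fun x' => h (t, x', y)) (Z := fun x' => Z (t, x', y))
      (by fun_prop) (by fun_prop) (by fun_prop)
  · exact horizontal_mapping_rule (f := fun p => ψ (t, x, p.1, p.2))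
      (H := fun y' => h (t, x, y')) (Z := fun y' => Z (t, x, y'))
      (by fun_prop) (by fun_prop) (by fun_prop)
  · exact (deriv_comp_mul_const_add_const (fun z => ψ (t, x, y, z)) _ _ ζ).symm
end

section
/- Let h, Z : ℝ³ → ℝ be continuously differentiable functions of (t,x,y) with h > 0 everywhere, and let u, v, w : ℝ⁴ → ℝ be continuously differentiable functions of (t,x,y,z) satisfying ∂_x u + ∂_y v + ∂_z w = 0 everywhere. Assume the kinematic free-surface boundary conditions: at z = h+Z, ∂_t(h+Z) + u·∂_x(h+Z) + v·∂_y(h+Z) = w, and at z = Z, ∂_t Z + u·∂_x Z + v·∂_y Z = w (with u, v, w evaluated at the corresponding z). Then for all (t,x,y): ∂_t h + ∂_x( ∫_{Z}^{h+Z} u(t,x,y,z) dz ) + ∂_y( ∫_{Z}^{h+Z} v(t,x,y,z) dz ) = 0. -/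
/-!
Integrate the incompressibility condition over the water column `Z ≤ z ≤ h + Z`. By the
Leibniz rule, the horizontal derivatives of the depth-integrated fluxes are the column
integrals of `∂_x u` and `∂_y v` plus the boundary terms `u ∂_x(h+Z) - u ∂_x Z` and
`v ∂_y(h+Z) - v ∂_y Z`, while incompressibility makes the two column integrals sum to
`w(Z) - w(h+Z)`. The kinematic conditions rewrite the boundary terms as
`(w(h+Z) - ∂_t(h+Z)) - (w(Z) - ∂_t Z)`, so everything cancels except `-∂_t h`.
-/

open intervalIntegral MeasureTheory Set

section Leibniz

variable {E : Type*} [NormedAddCommGroup E] [NormedSpace ℝ E]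

theorem ContDiff.hasDerivAt_fderiv_apply_inl {f : ℝ × ℝ → E} (hf : ContDiff ℝ 1 f) (s z : ℝ) :
    HasDerivAt (fun s' => f (s', z)) (fderiv ℝ f (s, z) (1, 0)) s :=
  (hf.differentiable one_ne_zero (s, z)).hasFDerivAt.comp_hasDerivAt s
    ((hasDerivAt_id s).prodMk (hasDerivAt_const s z))

theorem ContDiff.continuous_deriv_fst {f : ℝ × ℝ → E} (hf : ContDiff ℝ 1 f) :
    Continuous fun p : ℝ × ℝ => deriv (fun s => f (s, p.2)) p.1 := by
  have hpartial : (fun p : ℝ × ℝ => deriv (fun s => f (s, p.2)) p.1)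
      = fun p => fderiv ℝ f p (1, 0) :=
    funext fun p => (hf.hasDerivAt_fderiv_apply_inl p.1 p.2).deriv
  rw [hpartial]
  exact (hf.continuous_fderiv one_ne_zero).clm_apply continuous_const

theorem ContDiff.hasDerivAt_intervalIntegral_const_limits {f : ℝ × ℝ → E} (hf : ContDiff ℝ 1 f)
    (a b s₀ : ℝ) :
    HasDerivAt (fun s => ∫ z in a..b, f (s, z))
      (∫ z in a..b, deriv (fun s => f (s, z)) s₀) s₀ := by
  have hslice : ∀ s, Continuous fun z => f (s, z) := fun s =>
    hf.continuous.comp (continuous_const.prodMk continuous_id)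
  obtain ⟨C, hC⟩ := ((isCompact_closedBall s₀ 1).prod
    (isCompact_uIcc (a := a) (b := b))).exists_bound_of_continuousOn
      hf.continuous_deriv_fst.continuousOn
  refine (hasDerivAt_integral_of_dominated_loc_of_deriv_le (bound := fun _ => C)
    (Metric.ball_mem_nhds s₀ one_pos)
    (.of_forall fun s => (hslice s).aestronglyMeasurable)
    ((hslice s₀).intervalIntegrable a b)
    (hf.continuous_deriv_fst.comp (continuous_const.prodMk continuous_id)).aestronglyMeasurable
    (.of_forall fun z hz s hs =>
      hC (s, z) ⟨Metric.ball_subset_closedBall hs, uIoc_subset_uIcc hz⟩)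
    intervalIntegrable_const
    (.of_forall fun z _ s _ => ?_)).2
  exact (hf.hasDerivAt_fderiv_apply_inl s z).differentiableAt.hasDerivAt

variable [CompleteSpace E]

theorem hasFDerivAt_intervalIntegral_upper {g : ℝ × ℝ → E} (hg : Continuous g) (s₀ c₀ : ℝ) :
    HasFDerivAt (fun p : ℝ × ℝ => ∫ z in c₀..p.2, g (p.1, z))
      ((ContinuousLinearMap.snd ℝ ℝ ℝ).smulRight (g (s₀, c₀))) (s₀, c₀) := by
  rw [hasFDerivAt_iff_isLittleO_nhds_zero, Asymptotics.isLittleO_iff]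
  intro ε hε
  obtain ⟨δ, hδ, hgδ⟩ := Metric.continuousAt_iff.mp (hg.continuousAt (x := (s₀, c₀))) ε hε
  filter_upwards [Metric.ball_mem_nhds (0 : ℝ × ℝ) hδ] with q hq
  rw [mem_ball_zero_iff] at hq
  have hclose : ∀ z ∈ uIoc c₀ (c₀ + q.2), ‖g (s₀ + q.1, z) - g (s₀, c₀)‖ ≤ ε := by
    intro z hz
    have hz : |z - c₀| ≤ |q.2| := by
      simpa using abs_sub_left_of_mem_uIcc (uIoc_subset_uIcc hz)
    rw [← dist_eq_norm]
    refine (hgδ ?_).le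
    rw [Prod.dist_eq, Real.dist_eq, Real.dist_eq, add_sub_cancel_left]
    exact max_lt ((norm_fst_le q).trans_lt hq) (hz.trans_lt ((norm_snd_le q).trans_lt hq))
  have hint : IntervalIntegrable (fun z => g (s₀ + q.1, z)) volume c₀ (c₀ + q.2) :=
    (hg.comp (continuous_const.prodMk continuous_id)).intervalIntegrable _ _
  simp only [Prod.fst_add, Prod.snd_add, ContinuousLinearMap.smulRight_apply,
    ContinuousLinearMap.coe_snd']
  calc ‖(∫ z in c₀..c₀ + q.2, g (s₀ + q.1, z)) - (∫ z in c₀..c₀, g (s₀, z))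
        - q.2 • g (s₀, c₀)‖
      = ‖∫ z in c₀..c₀ + q.2, (g (s₀ + q.1, z) - g (s₀, c₀))‖ := by
        rw [integral_same, sub_zero, integral_sub hint intervalIntegrable_const,
          intervalIntegral.integral_const, add_sub_cancel_left]
    _ ≤ ε * |c₀ + q.2 - c₀| := norm_integral_le_of_norm_le_const hclose
    _ ≤ ε * ‖q‖ := by
        rw [add_sub_cancel_left]
        exact mul_le_mul_of_nonneg_left (norm_snd_le q) hε.le

theorem ContDiff.hasDerivAt_intervalIntegral {f : ℝ × ℝ → E} (hf : ContDiff ℝ 1 f)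
    {a b : ℝ → ℝ} {a' b' s₀ : ℝ} (ha : HasDerivAt a a' s₀) (hb : HasDerivAt b b' s₀) :
    HasDerivAt (fun s => ∫ z in a s..b s, f (s, z))
      (b' • f (s₀, b s₀) - a' • f (s₀, a s₀) + ∫ z in a s₀..b s₀, deriv (fun s => f (s, z)) s₀)
      s₀ := by
  have hint : ∀ s c d : ℝ, IntervalIntegrable (fun z => f (s, z)) volume c d := fun s c d =>
    (hf.continuous.comp (continuous_const.prodMk continuous_id)).intervalIntegrable c d
  have hsplit : ∀ s, ∫ z in a s..b s, f (s, z) = (∫ z in a s₀..b s₀, f (s, z))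
      + ((∫ z in b s₀..b s, f (s, z)) - ∫ z in a s₀..a s, f (s, z)) := fun s =>
    eq_add_of_sub_eq' (integral_interval_sub_interval_comm' (hint s _ _) (hint s _ _) (hint s _ _))
  have hmoving : ∀ {c : ℝ → ℝ} {c' : ℝ}, HasDerivAt c c' s₀ →
      HasDerivAt (fun s => ∫ z in c s₀..c s, f (s, z)) (c' • f (s₀, c s₀)) s₀ := by
    intro c c' hc
    simpa [Function.comp_def] using
      (hasFDerivAt_intervalIntegral_upper hf.continuous s₀ (c s₀)).comp_hasDerivAt s₀
        ((hasDerivAt_id s₀).prodMk hc)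
  rw [funext hsplit, add_comm]
  exact (hf.hasDerivAt_intervalIntegral_const_limits _ _ s₀).add ((hmoving hb).sub (hmoving ha))

end Leibniz

theorem shallow_water_mass_balance_general
    (h Z : ℝ × ℝ × ℝ → ℝ) (u v w : ℝ × ℝ × ℝ × ℝ → ℝ)
    (hC1 : ContDiff ℝ 1 h) (ZC1 : ContDiff ℝ 1 Z)
    (uC1 : ContDiff ℝ 1 u) (vC1 : ContDiff ℝ 1 v) (wC1 : ContDiff ℝ 1 w)
    (incomp : ∀ t x y z : ℝ,
      deriv (fun x' => u (t, x', y, z)) x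
        + deriv (fun y' => v (t, x, y', z)) y
        + deriv (fun z' => w (t, x, y, z')) z = 0)
    (bc_surface : ∀ t x y : ℝ,
      deriv (fun t' => h (t', x, y) + Z (t', x, y)) t
        + u (t, x, y, h (t, x, y) + Z (t, x, y)) *
            deriv (fun x' => h (t, x', y) + Z (t, x', y)) x
        + v (t, x, y, h (t, x, y) + Z (t, x, y)) *
            deriv (fun y' => h (t, x, y') + Z (t, x, y')) y
        = w (t, x, y, h (t, x, y) + Z (t, x, y)))
    (bc_bottom : ∀ t x y : ℝ,
      deriv (fun t' => Z (t', x, y)) t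
        + u (t, x, y, Z (t, x, y)) * deriv (fun x' => Z (t, x', y)) x
        + v (t, x, y, Z (t, x, y)) * deriv (fun y' => Z (t, x, y')) y
        = w (t, x, y, Z (t, x, y))) :
    ∀ t x y : ℝ,
      deriv (fun t' => h (t', x, y)) t
        + deriv
            (fun x' =>
              ∫ z in Z (t, x', y)..(h (t, x', y) + Z (t, x', y)),
                u (t, x', y, z)) x
        + deriv
            (fun y' =>
              ∫ z in Z (t, x, y')..(h (t, x, y') + Z (t, x, y')),
                v (t, x, y', z)) y
        = 0 := by
  intro t x y
  have hd := hC1.differentiable one_ne_zero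
  have Zd := ZC1.differentiable one_ne_zero
  have uxz : ContDiff ℝ 1 fun p : ℝ × ℝ => u (t, p.1, y, p.2) := by fun_prop
  have vyz : ContDiff ℝ 1 fun p : ℝ × ℝ => v (t, x, p.1, p.2) := by fun_prop
  have wz : ContDiff ℝ 1 fun z => w (t, x, y, z) := by fun_prop
  have leibniz_x := uxz.hasDerivAt_intervalIntegral
    (a := fun x' => Z (t, x', y)) (b := fun x' => h (t, x', y) + Z (t, x', y))
    (by fun_prop : DifferentiableAt ℝ _ x).hasDerivAt
    (by fun_prop : DifferentiableAt ℝ _ x).hasDerivAt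
  have leibniz_y := vyz.hasDerivAt_intervalIntegral
    (a := fun y' => Z (t, x, y')) (b := fun y' => h (t, x, y') + Z (t, x, y'))
    (by fun_prop : DifferentiableAt ℝ _ y).hasDerivAt
    (by fun_prop : DifferentiableAt ℝ _ y).hasDerivAt
  dsimp only at leibniz_x leibniz_y
  have hux : Continuous fun z => deriv (fun x' => u (t, x', y, z)) x :=
    uxz.continuous_deriv_fst.comp (continuous_const.prodMk continuous_id)
  have hvy : Continuous fun z => deriv (fun y' => v (t, x, y', z)) y :=
    vyz.continuous_deriv_fst.comp (continuous_const.prodMk continuous_id)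
  have hcolumn :
      (∫ z in Z (t, x, y)..h (t, x, y) + Z (t, x, y), deriv (fun x' => u (t, x', y, z)) x)
        + (∫ z in Z (t, x, y)..h (t, x, y) + Z (t, x, y), deriv (fun y' => v (t, x, y', z)) y)
      = w (t, x, y, Z (t, x, y)) - w (t, x, y, h (t, x, y) + Z (t, x, y)) := by
    rw [← integral_add (hux.intervalIntegrable _ _) (hvy.intervalIntegrable _ _)]
    calc _ = ∫ z in Z (t, x, y)..h (t, x, y) + Z (t, x, y),
            -deriv (fun z' => w (t, x, y, z')) z :=
          integral_congr fun z _ => eq_neg_of_add_eq_zero_left (incomp t x y z)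
      _ = _ := by
          rw [intervalIntegral.integral_neg,
            integral_deriv_eq_sub (fun z _ => wz.differentiable one_ne_zero z)
              ((wz.continuous_deriv le_rfl).intervalIntegrable _ _), neg_sub]
  have hsum_t : deriv (fun t' => h (t', x, y) + Z (t', x, y)) t
      = deriv (fun t' => h (t', x, y)) t + deriv (fun t' => Z (t', x, y)) t :=
    deriv_add (by fun_prop) (by fun_prop)
  rw [leibniz_x.deriv, leibniz_y.deriv]
  simp only [smul_eq_mul]
  linarith [bc_surface t x y, bc_bottom t x y]

/-- The shallow-water mass balance.  For a divergence-free
velocity field `(u,v,w)` satisfying the kinematic free-surface boundary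
conditions at the surface `z = h+Z` and the bottom `z = Z`, one has
`∂_t h + ∂_x(∫_Z^{h+Z} u dz) + ∂_y(∫_Z^{h+Z} v dz) = 0`. -/
theorem shallow_water_mass_balance
    (h Z : ℝ × ℝ × ℝ → ℝ) (u v w : ℝ × ℝ × ℝ × ℝ → ℝ)
    (hC1 : ContDiff ℝ 1 h) (ZC1 : ContDiff ℝ 1 Z)
    (hpos : ∀ p : ℝ × ℝ × ℝ, 0 < h p)
    (uC1 : ContDiff ℝ 1 u) (vC1 : ContDiff ℝ 1 v) (wC1 : ContDiff ℝ 1 w)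
    (incomp : ∀ t x y z : ℝ,
      deriv (fun x' => u (t, x', y, z)) x
        + deriv (fun y' => v (t, x, y', z)) y
        + deriv (fun z' => w (t, x, y, z')) z = 0)
    (bc_surface : ∀ t x y : ℝ,
      deriv (fun t' => h (t', x, y) + Z (t', x, y)) t
        + u (t, x, y, h (t, x, y) + Z (t, x, y)) *
            deriv (fun x' => h (t, x', y) + Z (t, x', y)) x
        + v (t, x, y, h (t, x, y) + Z (t, x, y)) *
            deriv (fun y' => h (t, x, y') + Z (t, x, y')) y
        = w (t, x, y, h (t, x, y) + Z (t, x, y)))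
    (bc_bottom : ∀ t x y : ℝ,
      deriv (fun t' => Z (t', x, y)) t
        + u (t, x, y, Z (t, x, y)) * deriv (fun x' => Z (t, x', y)) x
        + v (t, x, y, Z (t, x, y)) * deriv (fun y' => Z (t, x, y')) y
        = w (t, x, y, Z (t, x, y))) :
    ∀ t x y : ℝ,
      deriv (fun t' => h (t', x, y)) t
        + deriv
            (fun x' =>
              ∫ z in Z (t, x', y)..(h (t, x', y) + Z (t, x', y)),
                u (t, x', y, z)) x
        + deriv
            (fun y' =>
              ∫ z in Z (t, x, y')..(h (t, x, y') + Z (t, x, y')),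
                v (t, x, y', z)) y
        = 0 :=
  shallow_water_mass_balance_general h Z u v w hC1 ZC1 uC1 vC1 wC1 incomp bc_surface bc_bottom
end

section
/- Let h : ℝ² → ℝ be continuously differentiable with h > 0, and let u, v : ℝ³ → ℝ be continuously differentiable functions of (x,y,ζ). Define u_m(x,y) = ∫₀¹ u(x,y,ζ) dζ and v_m(x,y) = ∫₀¹ v(x,y,ζ) dζ, and define the vertical coupling hω(x,y,ζ) = −∂_x[ h(x,y)·∫₀^ζ (u(x,y,s) − u_m(x,y)) ds ] − ∂_y[ h(x,y)·∫₀^ζ (v(x,y,s) − v_m(x,y)) ds ]. Then for all (x,y,ζ): ∂_x(h u) + ∂_y(h v) + ∂_ζ(hω) = ∂_x(h u_m) + ∂_y(h v_m). -/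
open intervalIntegral

/-- The depth average of a function of `(x,y,ζ)` over `ζ ∈ [0,1]`. -/
noncomputable def depthMean (u : ℝ × ℝ × ℝ → ℝ) (x y : ℝ) : ℝ :=
  ∫ ζ in (0 : ℝ)..1, u (x, y, ζ)

/-- The velocity vertical coupling operator `hω` of the mapped shallow-flow
system:
`hω(x,y,ζ) = −∂_x[h·∫₀^ζ (u − u_m) ds] − ∂_y[h·∫₀^ζ (v − v_m) ds]`. -/
noncomputable def hOmega (h : ℝ × ℝ → ℝ) (u v : ℝ × ℝ × ℝ → ℝ)
    (x y ζ : ℝ) : ℝ :=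
  - deriv (fun x' =>
      h (x', y) * ∫ s in (0 : ℝ)..ζ, (u (x', y, s) - depthMean u x' y)) x
  - deriv (fun y' =>
      h (x, y') * ∫ s in (0 : ℝ)..ζ, (v (x, y', s) - depthMean v x y')) y

/-!
Expanding `∫₀^ζ (u - u_m) = ∫₀^ζ u - ζ u_m` and differentiating under the integral sign gives
`∂_x[h ∫₀^ζ (u - u_m)] = ∂_x h (∫₀^ζ u - ζ u_m) + h (∫₀^ζ ∂_x u - ζ ∂_x u_m)`, whose
`ζ`-derivative is, by the fundamental theorem of calculus, `∂_x(h u) - ∂_x(h u_m)`.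
The same holds in `y`, and the two identities add up to the divergence relation.
-/

open Function

section PartialDerivatives

variable {E : Type*} [NormedAddCommGroup E] [NormedSpace ℝ E] {F : ℝ → ℝ → E}

theorem hasDerivAt_uncurry_left (hF : Differentiable ℝ (uncurry F)) (x s : ℝ) :
    HasDerivAt (F · s) (fderiv ℝ (uncurry F) (x, s) (1, 0)) x :=
  (hF (x, s)).hasFDerivAt.comp_hasDerivAt (f := fun x' => (x', s)) x
    ((hasDerivAt_id x).prodMk (hasDerivAt_const x s))

theorem continuous_uncurry_deriv_left (hF : ContDiff ℝ 1 (uncurry F)) :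
    Continuous (uncurry fun x s => deriv (F · s) x) := by
  have hpartial : (uncurry fun x s => deriv (F · s) x) = fun p => fderiv ℝ (uncurry F) p (1, 0) :=
    funext fun p => (hasDerivAt_uncurry_left (hF.differentiable one_ne_zero) p.1 p.2).deriv
  rw [hpartial]
  exact (hF.continuous_fderiv one_ne_zero).clm_apply continuous_const

theorem hasDerivAt_intervalIntegral_of_contDiff (hF : ContDiff ℝ 1 (uncurry F)) (a b x : ℝ) :
    HasDerivAt (fun x' => ∫ s in a..b, F x' s) (∫ s in a..b, deriv (F · s) x) x := by
  have hF' := continuous_uncurry_deriv_left hF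
  obtain ⟨C, hC⟩ := ((isCompact_closedBall x 1).prod isCompact_uIcc).exists_bound_of_continuousOn
    hF'.continuousOn
  refine (hasDerivAt_integral_of_dominated_loc_of_deriv_le (F' := fun x s => deriv (F · s) x)
    (bound := fun _ => C) (Metric.ball_mem_nhds x one_pos) ?_ ?_ ?_ ?_ intervalIntegrable_const
    ?_).2
  · exact .of_forall fun x' => (hF.continuous.uncurry_left x').aestronglyMeasurable
  · exact (hF.continuous.uncurry_left x).intervalIntegrable a b
  · exact (hF'.uncurry_left x).aestronglyMeasurable
  · filter_upwards with s hs x' hx'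
    exact hC (x', s) ⟨Metric.ball_subset_closedBall hx', Set.uIoc_subset_uIcc hs⟩
  · filter_upwards with s hs x' hx'
    exact (hasDerivAt_uncurry_left (hF.differentiable one_ne_zero) x' s).differentiableAt.hasDerivAt

end PartialDerivatives

theorem hasDerivAt_deriv_mul_integral_sub {g m : ℝ → ℝ} {F : ℝ → ℝ → ℝ}
    (hg : Differentiable ℝ g) (hm : Differentiable ℝ m) (hF : ContDiff ℝ 1 (uncurry F))
    (x ζ : ℝ) :
    HasDerivAt (fun ζ' => deriv (fun x' => g x' * ∫ s in (0 : ℝ)..ζ', (F x' s - m x')) x)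
      (deriv (fun x' => g x' * F x' ζ) x - deriv (fun x' => g x' * m x') x) ζ := by
  set F₁ := fun s => deriv (F · s) x
  have hFx : Continuous (F x) := hF.continuous.uncurry_left x
  have hF₁ : Continuous F₁ := (continuous_uncurry_deriv_left hF).uncurry_left x
  have hflux : ∀ ζ', deriv (fun x' => g x' * ∫ s in (0 : ℝ)..ζ', (F x' s - m x')) x
      = deriv g x * ((∫ s in (0 : ℝ)..ζ', F x s) - ζ' * m x)
        + g x * ((∫ s in (0 : ℝ)..ζ', F₁ s) - ζ' * deriv m x) := by
    intro ζ'
    have hsplit : ∀ x', ∫ s in (0 : ℝ)..ζ', (F x' s - m x')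
        = (∫ s in (0 : ℝ)..ζ', F x' s) - ζ' * m x' := fun x' => by
        rw [integral_sub ((hF.continuous.uncurry_left x').intervalIntegrable _ _)
          intervalIntegrable_const, integral_const, smul_eq_mul, sub_zero]
    simp_rw [hsplit]
    exact ((hg x).hasDerivAt.mul ((hasDerivAt_intervalIntegral_of_contDiff hF 0 ζ' x).sub
      ((hm x).hasDerivAt.const_mul ζ'))).deriv
  have hFζ : HasDerivAt (F · ζ) (F₁ ζ) x :=
    (hasDerivAt_uncurry_left (hF.differentiable one_ne_zero) x ζ).differentiableAt.hasDerivAt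
  have hgF : HasDerivAt (fun x' => g x' * F x' ζ) (deriv g x * F x ζ + g x * F₁ ζ) x :=
    (hg x).hasDerivAt.mul hFζ
  have hgm : HasDerivAt (fun x' => g x' * m x') (deriv g x * m x + g x * deriv m x) x :=
    (hg x).hasDerivAt.mul (hm x).hasDerivAt
  rw [hgF.deriv, hgm.deriv]
  simp_rw [hflux]
  refine ((((hFx.integral_hasStrictDerivAt 0 ζ).hasDerivAt.sub
      (hasDerivAt_mul_const (m x))).const_mul (deriv g x)).add
    (((hF₁.integral_hasStrictDerivAt 0 ζ).hasDerivAt.sub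
      (hasDerivAt_mul_const (deriv m x))).const_mul (g x))).congr_deriv ?_
  ring

theorem velocity_vertical_coupling_divergence_general
    (h : ℝ × ℝ → ℝ) (u v : ℝ × ℝ × ℝ → ℝ)
    (hC1 : ContDiff ℝ 1 h)
    (uC1 : ContDiff ℝ 1 u) (vC1 : ContDiff ℝ 1 v) :
    ∀ x y ζ : ℝ,
      deriv (fun x' => h (x', y) * u (x', y, ζ)) x
        + deriv (fun y' => h (x, y') * v (x, y', ζ)) y
        + deriv (fun ζ' => hOmega h u v x y ζ') ζ
      = deriv (fun x' => h (x', y) * depthMean u x' y) x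
        + deriv (fun y' => h (x, y') * depthMean v x y') y := by
  intro x y ζ
  have hh : Differentiable ℝ h := hC1.differentiable one_ne_zero
  have hu : ContDiff ℝ 1 (uncurry fun x' s => u (x', y, s)) := uC1.comp (by fun_prop)
  have hv : ContDiff ℝ 1 (uncurry fun y' s => v (x, y', s)) := vC1.comp (by fun_prop)
  have hx := hasDerivAt_deriv_mul_integral_sub (g := fun x' => h (x', y))
    (m := fun x' => depthMean u x' y) (hh.comp (by fun_prop))
    (fun x' => (hasDerivAt_intervalIntegral_of_contDiff hu 0 1 x').differentiableAt) hu x ζ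
  have hy := hasDerivAt_deriv_mul_integral_sub (g := fun y' => h (x, y'))
    (m := fun y' => depthMean v x y') (hh.comp (by fun_prop))
    (fun y' => (hasDerivAt_intervalIntegral_of_contDiff hv 0 1 y').differentiableAt) hv y ζ
  have hΩ : HasDerivAt (fun ζ' => hOmega h u v x y ζ') _ ζ := hx.neg.sub hy
  rw [hΩ.deriv]
  ring

/-- Divergence relation satisfied by the velocity vertical
coupling operator:
`∂_x(hu) + ∂_y(hv) + ∂_ζ(hω) = ∂_x(h u_m) + ∂_y(h v_m)`. -/
theorem velocity_vertical_coupling_divergence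
    (h : ℝ × ℝ → ℝ) (u v : ℝ × ℝ × ℝ → ℝ)
    (hC1 : ContDiff ℝ 1 h) (hpos : ∀ p : ℝ × ℝ, 0 < h p)
    (uC1 : ContDiff ℝ 1 u) (vC1 : ContDiff ℝ 1 v) :
    ∀ x y ζ : ℝ,
      deriv (fun x' => h (x', y) * u (x', y, ζ)) x
        + deriv (fun y' => h (x, y') * v (x, y', ζ)) y
        + deriv (fun ζ' => hOmega h u v x y ζ') ζ
      = deriv (fun x' => h (x', y) * depthMean u x' y) x
        + deriv (fun y' => h (x, y') * depthMean v x y') y :=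
  velocity_vertical_coupling_divergence_general h u v hC1 uC1 vC1
end

section
/- Let M ≥ 1 be a natural number, let h : ℝ² → ℝ be continuously differentiable with h > 0, and let u_m, v_m, α₁,…,α_M, β₁,…,β_M : ℝ² → ℝ be continuously differentiable. Define u(x,y,ζ) = u_m(x,y) + Σ_{ℓ=1}^M α_ℓ(x,y)·φ_ℓ(ζ) and v(x,y,ζ) = v_m(x,y) + Σ_{ℓ=1}^M β_ℓ(x,y)·φ_ℓ(ζ); define hω(x,y,ζ) = −∂_x[ h·Σ_{ℓ=1}^M α_ℓ·∫₀^ζ φ_ℓ(s) ds ] − ∂_y[ h·Σ_{ℓ=1}^M β_ℓ·∫₀^ζ φ_ℓ(s) ds ]; define D_ℓ = ∂_x(h α_ℓ) + ∂_y(h β_ℓ) and B_{iℓn} = (2i+1)·∫₀¹ φ_i′(ζ)·( ∫₀^ζ φ_ℓ(s) ds )·φ_n(ζ) dζ. Then for every 1 ≤ i ≤ M and all (x,y): ∫₀¹ φ_i(ζ)·∂_ζ[ u·(hω) ](x,y,ζ) dζ = −(1/(2i+1))·( u_m·D_i − Σ_{ℓ=1}^M Σ_{n=1}^M B_{iℓn}·α_n·D_ℓ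 ). -/
open intervalIntegral

/-- The shifted Legendre polynomial on `[0,1]`, normalized so that
`φ_ℓ(0) = 1`, given by the Rodrigues formula
`φ_ℓ(ζ) = ((−1)^ℓ/ℓ!)·(d/dζ)^ℓ[(ζ²−ζ)^ℓ]`. -/
noncomputable def legendreShifted (n : ℕ) : ℝ → ℝ := fun ζ =>
  ((-1 : ℝ) ^ n / (Nat.factorial n : ℝ)) *
    iteratedDeriv n (fun z : ℝ => (z ^ 2 - z) ^ n) ζ

/-- The polynomial expansion `u(x,y,ζ) = u_m(x,y) + Σ_{ℓ=1}^M α_ℓ(x,y)·φ_ℓ(ζ)`. -/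
noncomputable def momentExpansion (M : ℕ) (um : ℝ × ℝ → ℝ)
    (α : ℕ → ℝ × ℝ → ℝ) (x y ζ : ℝ) : ℝ :=
  um (x, y) + ∑ ℓ ∈ Finset.Icc 1 M, α ℓ (x, y) * legendreShifted ℓ ζ

/-- The velocity vertical coupling operator `hω` evaluated on the polynomial
expansion:
`hω(x,y,ζ) = −∂_x[h·Σ_{ℓ=1}^M α_ℓ·∫₀^ζ φ_ℓ ds] − ∂_y[h·Σ_{ℓ=1}^M β_ℓ·∫₀^ζ φ_ℓ ds]`. -/
noncomputable def hOmegaExp (M : ℕ) (h : ℝ × ℝ → ℝ)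
    (α β : ℕ → ℝ × ℝ → ℝ) (x y ζ : ℝ) : ℝ :=
  - deriv (fun x' =>
      h (x', y) *
        ∑ ℓ ∈ Finset.Icc 1 M,
          α ℓ (x', y) * ∫ s in (0 : ℝ)..ζ, legendreShifted ℓ s) x
  - deriv (fun y' =>
      h (x, y') *
        ∑ ℓ ∈ Finset.Icc 1 M,
          β ℓ (x, y') * ∫ s in (0 : ℝ)..ζ, legendreShifted ℓ s) y

/-- `D_ℓ = ∂_x(h α_ℓ) + ∂_y(h β_ℓ)`. -/
noncomputable def Dcoef (h : ℝ × ℝ → ℝ) (α β : ℕ → ℝ × ℝ → ℝ)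
    (ℓ : ℕ) (x y : ℝ) : ℝ :=
  deriv (fun x' => h (x', y) * α ℓ (x', y)) x
    + deriv (fun y' => h (x, y') * β ℓ (x, y')) y

/-- `B_{iℓn} = (2i+1)·∫₀¹ φ_i′(ζ)·(∫₀^ζ φ_ℓ ds)·φ_n(ζ) dζ`. -/
noncomputable def Bcoef (i ℓ n : ℕ) : ℝ :=
  (2 * (i : ℝ) + 1) *
    ∫ ζ in (0 : ℝ)..1,
      deriv (legendreShifted i) ζ *
        (∫ s in (0 : ℝ)..ζ, legendreShifted ℓ s) * legendreShifted n ζ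

/-!
Writing `Φ_ℓ(ζ) = ∫₀^ζ φ_ℓ`, linearity of the horizontal derivatives gives `hω = -Σ_ℓ D_ℓ Φ_ℓ`.
For `ℓ ≥ 1` the primitive `Φ_ℓ` vanishes at both ends of `[0,1]` (`φ_ℓ` is orthogonal to the
constants), so one integration by parts moves `∂_ζ` onto `φ_i` without boundary terms and the
moment becomes `Σ_ℓ D_ℓ ∫₀¹ φ_i' Φ_ℓ u`. Expanding `u` produces the `B_{iℓn}` terms, and the
`u_m` term is evaluated by a second integration by parts, `∫₀¹ φ_i' Φ_ℓ = -∫₀¹ φ_i φ_ℓ`,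
which is `-1/(2i+1)` if `ℓ = i` and `0` otherwise.

Orthogonality and the norms of the `φ_n` follow from the Rodrigues formula by `n`-fold
integration by parts against `(ζ² - ζ)^n`, whose derivatives of order `< n` vanish at `0` and
`1`, together with the Beta integral `∫₀¹ x^m (1-x)^n = m! n! / (m+n+1)!`.
-/

open Polynomial
open scoped Nat

theorem integral_mul_deriv_eq_neg_of_eq_zero {f g : ℝ → ℝ} {a b : ℝ} (hf : ContDiff ℝ 1 f)
    (hg : ContDiff ℝ 1 g) (ha : g a = 0) (hb : g b = 0) :
    ∫ x in a..b, f x * deriv g x = -∫ x in a..b, deriv f x * g x := by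
  obtain ⟨hf_diff, hf'_cont⟩ := contDiff_one_iff_deriv.1 hf
  obtain ⟨hg_diff, hg'_cont⟩ := contDiff_one_iff_deriv.1 hg
  rw [intervalIntegral.integral_mul_deriv_eq_deriv_mul (fun x _ => (hf_diff x).hasDerivAt)
    (fun x _ => (hg_diff x).hasDerivAt) (hf'_cont.intervalIntegrable a b)
    (hg'_cont.intervalIntegrable a b), ha, hb]
  ring

theorem integral_finset_sum_const_mul {ι : Type*} (s : Finset ι) (c : ι → ℝ) {f : ι → ℝ → ℝ}
    {a b : ℝ} (hf : ∀ k ∈ s, IntervalIntegrable (f k) MeasureTheory.volume a b) :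
    ∫ x in a..b, ∑ k ∈ s, c k * f k x = ∑ k ∈ s, c k * ∫ x in a..b, f k x := by
  rw [intervalIntegral.integral_finsetSum fun k hk => (hf k hk).const_mul (c k)]
  simp_rw [intervalIntegral.integral_const_mul]

theorem deriv_mul_finset_sum_mul_const {ι : Type*} {s : Finset ι} {f : ℝ → ℝ} {g : ι → ℝ → ℝ}
    (c : ι → ℝ) {x : ℝ} (hf : DifferentiableAt ℝ f x)
    (hg : ∀ k ∈ s, DifferentiableAt ℝ (g k) x) :
    deriv (fun t => f t * ∑ k ∈ s, g k t * c k) x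
      = ∑ k ∈ s, deriv (fun t => f t * g k t) x * c k := by
  simp_rw [Finset.mul_sum, ← mul_assoc]
  rw [deriv_fun_sum (A := fun k t => f t * g k t * c k) fun k hk =>
    (hf.fun_mul (hg k hk)).mul_const (c k)]
  exact Finset.sum_congr rfl fun k _ => deriv_mul_const_field _

theorem integral_pow_mul_one_sub_pow (m n : ℕ) :
    ∫ x in (0 : ℝ)..1, x ^ m * (1 - x) ^ n = (m ! * n ! : ℝ) / (m + n + 1)! := by
  induction n generalizing m with
  | zero =>
    simp only [pow_zero, mul_one, integral_pow, add_zero]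
    rw [Nat.factorial_succ]
    push_cast
    field_simp
    simp
  | succ n ih =>
    have hibp := intervalIntegral.integral_mul_deriv_eq_deriv_mul (a := 0) (b := 1)
      (u := fun x : ℝ => (1 - x) ^ (n + 1)) (v := fun x : ℝ => x ^ (m + 1))
      (u' := fun x => -((n + 1 : ℝ) * (1 - x) ^ n)) (v' := fun x => (m + 1 : ℝ) * x ^ m)
      (fun x _ => by simpa using ((hasDerivAt_id x).const_sub 1).fun_pow (n + 1))
      (fun x _ => by simpa using (hasDerivAt_id x).fun_pow (m + 1))
      (Continuous.intervalIntegrable (by fun_prop) _ _)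
      (Continuous.intervalIntegrable (by fun_prop) _ _)
    have hrec : (m + 1 : ℝ) * ∫ x in (0 : ℝ)..1, x ^ m * (1 - x) ^ (n + 1)
        = (n + 1) * ∫ x in (0 : ℝ)..1, x ^ (m + 1) * (1 - x) ^ n := by
      simp only [← intervalIntegral.integral_const_mul]
      simp only [sub_self, one_pow, zero_pow (Nat.succ_ne_zero _), zero_mul, mul_zero,
        sub_zero, neg_mul, intervalIntegral.integral_neg, sub_neg_eq_add, zero_add] at hibp
      convert hibp using 2 <;> ext x <;> ring
    rw [ih (m + 1)] at hrec
    rw [← mul_right_inj' (by positivity : (m + 1 : ℝ) ≠ 0), hrec,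
      show m + 1 + n + 1 = m + (n + 1) + 1 by omega]
    push_cast [Nat.factorial_succ]
    ring

theorem integral_derivative_mul_eval (p q : ℝ[X]) (a b : ℝ) :
    ∫ x in a..b, (derivative p).eval x * q.eval x
      = p.eval b * q.eval b - p.eval a * q.eval a
        - ∫ x in a..b, p.eval x * (derivative q).eval x := by
  have hibp := intervalIntegral.integral_mul_deriv_eq_deriv_mul
    (fun x _ => q.hasDerivAt x) (fun x _ => p.hasDerivAt x)
    (q.derivative.continuous.intervalIntegrable a b)
    (p.derivative.continuous.intervalIntegrable a b)
  simp only [mul_comm (q.eval _), mul_comm (q.derivative.eval _)] at hibp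
  exact hibp

theorem integral_iterate_derivative_mul_eval (k : ℕ) (p q : ℝ[X]) {a b : ℝ}
    (hp : ∀ j < k, (derivative^[j] p).eval a = 0 ∧ (derivative^[j] p).eval b = 0) :
    ∫ x in a..b, (derivative^[k] p).eval x * q.eval x
      = (-1) ^ k * ∫ x in a..b, p.eval x * (derivative^[k] q).eval x := by
  induction k generalizing p with
  | zero => simp
  | succ k ih =>
    obtain ⟨hpa, hpb⟩ : p.eval a = 0 ∧ p.eval b = 0 := hp 0 k.succ_pos
    rw [Function.iterate_succ_apply, ih (derivative p) fun j hj => by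
      simpa only [← Function.iterate_succ_apply] using hp (j + 1) (by omega),
      integral_derivative_mul_eval, hpa, hpb, ← Function.iterate_succ_apply' derivative]
    ring

theorem iteratedDeriv_eval (p : ℝ[X]) (k : ℕ) :
    iteratedDeriv k (fun x => p.eval x) = fun x => (derivative^[k] p).eval x := by
  induction k with
  | zero => simp
  | succ k ih =>
    ext x
    rw [iteratedDeriv_succ, ih, Function.iterate_succ_apply']
    exact Polynomial.deriv _

noncomputable def rodriguesPoly (n : ℕ) : ℝ[X] := (X ^ 2 - X) ^ n

theorem natDegree_rodriguesPoly (n : ℕ) : (rodriguesPoly n).natDegree = 2 * n := by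
  rw [rodriguesPoly, natDegree_pow, mul_comm]
  congr
  compute_degree!

theorem iterate_derivative_rodriguesPoly_eval_eq_zero {n j : ℕ} (hj : j < n) {t : ℝ}
    (ht : t = 0 ∨ t = 1) : (derivative^[j] (rodriguesPoly n)).eval t = 0 := by
  have hdvd : (X - C t) ^ n ∣ rodriguesPoly n := by
    have hfactor : (X ^ 2 - X : ℝ[X]) = (X - C 0) * (X - C 1) := by simp; ring
    rw [rodriguesPoly, hfactor, mul_pow]
    rcases ht with rfl | rfl
    · exact dvd_mul_right _ _
    · exact dvd_mul_left _ _
  obtain ⟨q, hq⟩ := pow_sub_dvd_iterate_derivative_of_pow_dvd j hdvd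
  simp [hq, Nat.sub_ne_zero_of_lt hj]

theorem iterate_derivative_rodriguesPoly_self (n : ℕ) :
    derivative^[2 * n] (rodriguesPoly n) = C ((2 * n)! : ℝ) := by
  have hmonic : (rodriguesPoly n).Monic := by
    refine Monic.pow ?_ n
    exact monic_X_pow_sub (degree_X_le.trans_lt (by norm_num))
  rw [eq_C_of_natDegree_le_zero (p := derivative^[2 * n] (rodriguesPoly n)) (by
    simpa [natDegree_rodriguesPoly] using
      natDegree_iterate_derivative (rodriguesPoly n) (2 * n))]
  rw [coeff_iterate_derivative, zero_add, ← natDegree_rodriguesPoly n, hmonic.coeff_natDegree,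
    natDegree_rodriguesPoly, Nat.descFactorial_self]
  simp

theorem integral_rodriguesPoly (n : ℕ) :
    ∫ x in (0 : ℝ)..1, (rodriguesPoly n).eval x
      = (-1) ^ n * (n ! * n ! : ℝ) / (2 * n + 1)! := by
  have hpow : ∀ x : ℝ, (rodriguesPoly n).eval x = (-1) ^ n * (x ^ n * (1 - x) ^ n) := by
    intro x
    simp only [rodriguesPoly, eval_pow, eval_sub, eval_X, ← mul_pow]
    ring
  simp only [hpow, intervalIntegral.integral_const_mul, integral_pow_mul_one_sub_pow, two_mul]
  ring

noncomputable def legendrePoly (n : ℕ) : ℝ[X] :=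
  C ((-1 : ℝ) ^ n / n !) * derivative^[n] (rodriguesPoly n)

theorem legendreShifted_eq_eval (n : ℕ) :
    legendreShifted n = fun x => (legendrePoly n).eval x := by
  ext x
  have hrod : (fun z : ℝ => (z ^ 2 - z) ^ n) = fun z => (rodriguesPoly n).eval z := by
    simp [rodriguesPoly]
  rw [legendreShifted, hrod, iteratedDeriv_eval, legendrePoly, eval_mul, eval_C]

theorem natDegree_legendrePoly_le (n : ℕ) : (legendrePoly n).natDegree ≤ n := by
  refine natDegree_C_mul_le _ _ |>.trans ?_
  have := natDegree_iterate_derivative (rodriguesPoly n) n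
  rw [natDegree_rodriguesPoly] at this
  omega

theorem contDiff_legendreShifted (n : ℕ) (k : WithTop ℕ∞) :
    ContDiff ℝ k (legendreShifted n) := by
  rw [legendreShifted_eq_eval]
  simpa using (legendrePoly n).contDiff_aeval (𝕜 := ℝ) k

theorem integral_legendreShifted_mul_eval (n : ℕ) (q : ℝ[X]) :
    ∫ x in (0 : ℝ)..1, legendreShifted n x * q.eval x
      = 1 / n ! * ∫ x in (0 : ℝ)..1, (rodriguesPoly n).eval x * (derivative^[n] q).eval x := by
  simp only [legendreShifted_eq_eval, legendrePoly, eval_mul, eval_C, mul_assoc,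
    intervalIntegral.integral_const_mul]
  rw [integral_iterate_derivative_mul_eval n _ _ fun j hj =>
    ⟨iterate_derivative_rodriguesPoly_eval_eq_zero hj (Or.inl rfl),
      iterate_derivative_rodriguesPoly_eval_eq_zero hj (Or.inr rfl)⟩]
  rw [← mul_assoc, div_mul_eq_mul_div, ← pow_add, ← two_mul, pow_mul]
  norm_num

theorem integral_legendreShifted_mul_eval_eq_zero {n : ℕ} (q : ℝ[X]) (hq : q.natDegree < n) :
    ∫ x in (0 : ℝ)..1, legendreShifted n x * q.eval x = 0 := by
  simp [integral_legendreShifted_mul_eval, iterate_derivative_eq_zero hq]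

theorem integral_legendreShifted_mul_self (n : ℕ) :
    ∫ x in (0 : ℝ)..1, legendreShifted n x * legendreShifted n x = 1 / (2 * n + 1) := by
  have hlead : derivative^[n] (legendrePoly n) = C ((-1 : ℝ) ^ n * (2 * n)! / n !) := by
    rw [legendrePoly, iterate_derivative_C_mul, ← Function.iterate_add_apply, ← two_mul,
      iterate_derivative_rodriguesPoly_self, ← C_mul]
    ring_nf
  conv_lhs => enter [1, x, 2]; rw [legendreShifted_eq_eval]
  rw [integral_legendreShifted_mul_eval, hlead]
  simp only [eval_C, intervalIntegral.integral_mul_const, integral_rodriguesPoly]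
  rw [Nat.factorial_succ]
  push_cast
  field_simp
  rw [← pow_mul, mul_comm, pow_mul]
  norm_num

theorem integral_legendreShifted_mul (m n : ℕ) :
    ∫ x in (0 : ℝ)..1, legendreShifted m x * legendreShifted n x
      = if m = n then 1 / (2 * n + 1 : ℝ) else 0 := by
  split_ifs with hmn
  · rw [hmn, integral_legendreShifted_mul_self]
  rcases lt_or_gt_of_ne hmn with hlt | hlt
  · simp_rw [mul_comm (legendreShifted m _)]
    conv_lhs => enter [1, x, 2]; rw [legendreShifted_eq_eval]
    exact integral_legendreShifted_mul_eval_eq_zero _ ((natDegree_legendrePoly_le m).trans_lt hlt)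
  · conv_lhs => enter [1, x, 2]; rw [legendreShifted_eq_eval]
    exact integral_legendreShifted_mul_eval_eq_zero _ ((natDegree_legendrePoly_le n).trans_lt hlt)

theorem integral_legendreShifted_eq_zero {n : ℕ} (hn : 1 ≤ n) :
    ∫ x in (0 : ℝ)..1, legendreShifted n x = 0 := by
  simpa using integral_legendreShifted_mul_eval_eq_zero (n := n) 1 (by simp; omega)

noncomputable def legendrePrimitive (n : ℕ) (ζ : ℝ) : ℝ := ∫ s in (0 : ℝ)..ζ, legendreShifted n s

theorem hasDerivAt_legendrePrimitive (n : ℕ) (ζ : ℝ) :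
    HasDerivAt (legendrePrimitive n) (legendreShifted n ζ) ζ :=
  ((contDiff_legendreShifted n 0).continuous.integral_hasStrictDerivAt 0 ζ).hasDerivAt

theorem contDiff_legendrePrimitive (n : ℕ) : ContDiff ℝ 1 (legendrePrimitive n) := by
  refine contDiff_one_iff_deriv.2
    ⟨fun ζ => (hasDerivAt_legendrePrimitive n ζ).differentiableAt, ?_⟩
  rw [funext fun ζ => (hasDerivAt_legendrePrimitive n ζ).deriv]
  exact (contDiff_legendreShifted n 0).continuous

theorem legendrePrimitive_zero (n : ℕ) : legendrePrimitive n 0 = 0 :=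
  intervalIntegral.integral_same

theorem legendrePrimitive_one {n : ℕ} (hn : 1 ≤ n) : legendrePrimitive n 1 = 0 :=
  integral_legendreShifted_eq_zero hn

theorem integral_deriv_legendreShifted_mul_primitive (i : ℕ) {ℓ : ℕ} (hℓ : 1 ≤ ℓ) :
    ∫ ζ in (0 : ℝ)..1, deriv (legendreShifted i) ζ * legendrePrimitive ℓ ζ
      = if i = ℓ then -(1 / (2 * i + 1 : ℝ)) else 0 := by
  have hibp := integral_mul_deriv_eq_neg_of_eq_zero (contDiff_legendreShifted i 1)
    (contDiff_legendrePrimitive ℓ) (legendrePrimitive_zero ℓ) (legendrePrimitive_one hℓ)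
  simp only [fun ζ => (hasDerivAt_legendrePrimitive ℓ ζ).deriv,
    integral_legendreShifted_mul] at hibp
  split_ifs at hibp ⊢ with hiℓ
  · subst hiℓ
    linarith
  · linarith

theorem integral_mul_const_add_sum_mul_legendreShifted {g : ℝ → ℝ} (hg : Continuous g)
    (s : Finset ℕ) (c : ℝ) (a : ℕ → ℝ) (x₀ x₁ : ℝ) :
    ∫ x in x₀..x₁, g x * (c + ∑ n ∈ s, a n * legendreShifted n x)
      = c * (∫ x in x₀..x₁, g x)
        + ∑ n ∈ s, a n * ∫ x in x₀..x₁, g x * legendreShifted n x := by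
  have hterm (n : ℕ) : Continuous fun x => g x * legendreShifted n x :=
    hg.mul (contDiff_legendreShifted n 0).continuous
  rw [← integral_finset_sum_const_mul s a fun n _ => (hterm n).intervalIntegrable x₀ x₁,
    ← intervalIntegral.integral_const_mul c,
    ← intervalIntegral.integral_add ((hg.intervalIntegrable x₀ x₁).const_mul c)
      ((continuous_finsetSum s fun n _ => (hterm n).const_mul (a n)).intervalIntegrable x₀ x₁)]
  congr 1
  ext x
  rw [mul_add, Finset.mul_sum]
  congr 1
  · ring
  · exact Finset.sum_congr rfl fun n _ => by ring

theorem integral_legendreShifted_mul_deriv_expansion_mul_primitive {i : ℕ} {s t : Finset ℕ}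
    (hit : i ∈ t) (ht : ∀ ℓ ∈ t, 1 ≤ ℓ) (c : ℝ) (a d : ℕ → ℝ) :
    ∫ ζ in (0 : ℝ)..1, legendreShifted i ζ *
        deriv (fun ζ' => (c + ∑ n ∈ s, a n * legendreShifted n ζ') *
          -∑ ℓ ∈ t, d ℓ * legendrePrimitive ℓ ζ') ζ
      = -(1 / (2 * i + 1)) * (c * d i - ∑ ℓ ∈ t, ∑ n ∈ s, Bcoef i ℓ n * a n * d ℓ) := by
  set U := fun ζ => c + ∑ n ∈ s, a n * legendreShifted n ζ
  set W := fun ζ => ∑ ℓ ∈ t, d ℓ * legendrePrimitive ℓ ζ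
  have hU : ContDiff ℝ 1 U := contDiff_const.add <|
    ContDiff.sum fun n _ => contDiff_const.mul (contDiff_legendreShifted n 1)
  have hW : ContDiff ℝ 1 W :=
    ContDiff.sum fun ℓ _ => contDiff_const.mul (contDiff_legendrePrimitive ℓ)
  have hW0 : W 0 = 0 := by simp [W, legendrePrimitive_zero]
  have hW1 : W 1 = 0 :=
    Finset.sum_eq_zero fun ℓ hℓ => by simp [legendrePrimitive_one (ht ℓ hℓ)]
  have hφ' : Continuous (deriv (legendreShifted i)) :=
    (contDiff_one_iff_deriv.1 (contDiff_legendreShifted i 1)).2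
  have hq : (2 * i + 1 : ℝ) ≠ 0 := by positivity
  calc ∫ ζ in (0 : ℝ)..1, legendreShifted i ζ * deriv (fun ζ' => U ζ' * -W ζ') ζ
      = -∫ ζ in (0 : ℝ)..1, deriv (legendreShifted i) ζ * (U ζ * -W ζ) :=
        integral_mul_deriv_eq_neg_of_eq_zero (contDiff_legendreShifted i 1) (hU.mul hW.neg)
          (by simp [hW0]) (by simp [hW1])
    _ = ∑ ℓ ∈ t, d ℓ * ∫ ζ in (0 : ℝ)..1,
          deriv (legendreShifted i) ζ * legendrePrimitive ℓ ζ * U ζ := by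
        rw [← integral_finset_sum_const_mul t d
            (f := fun ℓ ζ => deriv (legendreShifted i) ζ * legendrePrimitive ℓ ζ * U ζ)
            fun ℓ _ => ((hφ'.mul (contDiff_legendrePrimitive ℓ).continuous).mul
              hU.continuous).intervalIntegrable 0 1,
          ← intervalIntegral.integral_neg]
        congr 1
        ext ζ
        rw [mul_neg, mul_neg, neg_neg, Finset.mul_sum, Finset.mul_sum]
        exact Finset.sum_congr rfl fun ℓ _ => by ring
    _ = ∑ ℓ ∈ t, (c * (if i = ℓ then -(1 / (2 * i + 1 : ℝ)) else 0)
          + (∑ n ∈ s, Bcoef i ℓ n * a n) / (2 * i + 1)) * d ℓ := by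
        refine Finset.sum_congr rfl fun ℓ hℓ => ?_
        rw [mul_comm, integral_mul_const_add_sum_mul_legendreShifted
            (g := fun ζ => deriv (legendreShifted i) ζ * legendrePrimitive ℓ ζ)
            (hφ'.mul (contDiff_legendrePrimitive ℓ).continuous),
          integral_deriv_legendreShifted_mul_primitive i (ht ℓ hℓ), Finset.sum_div]
        simp only [Bcoef, legendrePrimitive]
        congr 2
        exact Finset.sum_congr rfl fun n _ => by field_simp
    _ = _ := by
        simp only [add_mul, Finset.sum_add_distrib, mul_ite, mul_zero, ite_mul, zero_mul,
          Finset.sum_ite_eq, hit, if_true, div_mul_eq_mul_div, ← Finset.sum_div, Finset.sum_mul]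
        ring

theorem hOmegaExp_eq_neg_sum_Dcoef_mul_legendrePrimitive (M : ℕ) {h : ℝ × ℝ → ℝ}
    {α β : ℕ → ℝ × ℝ → ℝ} (hh : Differentiable ℝ h)
    (hα : ∀ ℓ, Differentiable ℝ (α ℓ)) (hβ : ∀ ℓ, Differentiable ℝ (β ℓ)) (x y ζ : ℝ) :
    hOmegaExp M h α β x y ζ
      = -∑ ℓ ∈ Finset.Icc 1 M, Dcoef h α β ℓ x y * legendrePrimitive ℓ ζ := by
  rw [hOmegaExp, deriv_mul_finset_sum_mul_const _ (by fun_prop) fun ℓ _ => by fun_prop,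
    deriv_mul_finset_sum_mul_const _ (by fun_prop) fun ℓ _ => by fun_prop]
  simp only [Dcoef, add_mul, Finset.sum_add_distrib, legendrePrimitive]
  ring

theorem moment_of_velocity_vertical_coupling_general
    (M : ℕ)
    (h : ℝ × ℝ → ℝ) (hC1 : ContDiff ℝ 1 h)
    (um : ℝ × ℝ → ℝ)
    (α β : ℕ → ℝ × ℝ → ℝ)
    (αC1 : ∀ ℓ : ℕ, ContDiff ℝ 1 (α ℓ)) (βC1 : ∀ ℓ : ℕ, ContDiff ℝ 1 (β ℓ)) :
    ∀ i : ℕ, 1 ≤ i → i ≤ M → ∀ x y : ℝ,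
      (∫ ζ in (0 : ℝ)..1,
          legendreShifted i ζ *
            deriv (fun ζ' =>
              momentExpansion M um α x y ζ' * hOmegaExp M h α β x y ζ') ζ)
        = -(1 / (2 * (i : ℝ) + 1)) *
            (um (x, y) * Dcoef h α β i x y
              - ∑ ℓ ∈ Finset.Icc 1 M, ∑ n ∈ Finset.Icc 1 M,
                  Bcoef i ℓ n * α n (x, y) * Dcoef h α β ℓ x y) := by
  intro i hi hiM x y
  simp only [momentExpansion, hOmegaExp_eq_neg_sum_Dcoef_mul_legendrePrimitive M
    (hC1.differentiable one_ne_zero) (fun ℓ => (αC1 ℓ).differentiable one_ne_zero)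
    (fun ℓ => (βC1 ℓ).differentiable one_ne_zero)]
  exact integral_legendreShifted_mul_deriv_expansion_mul_primitive
    (Finset.mem_Icc.2 ⟨hi, hiM⟩) (fun ℓ hℓ => (Finset.mem_Icc.1 hℓ).1) _ _ _

/-- The moment of the velocity vertical-coupling term of the
shallow water moment equations: for every `1 ≤ i ≤ M`,
`∫₀¹ φ_i·∂_ζ[u·(hω)] dζ = −(1/(2i+1))·(u_m·D_i − Σ_{ℓ,n} B_{iℓn}·α_n·D_ℓ)`. -/
theorem moment_of_velocity_vertical_coupling
    (M : ℕ) (hM : 1 ≤ M)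
    (h : ℝ × ℝ → ℝ) (hC1 : ContDiff ℝ 1 h) (hpos : ∀ p : ℝ × ℝ, 0 < h p)
    (um vm : ℝ × ℝ → ℝ) (umC1 : ContDiff ℝ 1 um) (vmC1 : ContDiff ℝ 1 vm)
    (α β : ℕ → ℝ × ℝ → ℝ)
    (αC1 : ∀ ℓ : ℕ, ContDiff ℝ 1 (α ℓ)) (βC1 : ∀ ℓ : ℕ, ContDiff ℝ 1 (β ℓ)) :
    ∀ i : ℕ, 1 ≤ i → i ≤ M → ∀ x y : ℝ,
      (∫ ζ in (0 : ℝ)..1,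
          legendreShifted i ζ *
            deriv (fun ζ' =>
              momentExpansion M um α x y ζ' * hOmegaExp M h α β x y ζ') ζ)
        = -(1 / (2 * (i : ℝ) + 1)) *
            (um (x, y) * Dcoef h α β i x y
              - ∑ ℓ ∈ Finset.Icc 1 M, ∑ n ∈ Finset.Icc 1 M,
                  Bcoef i ℓ n * α n (x, y) * Dcoef h α β ℓ x y) :=
  moment_of_velocity_vertical_coupling_general M h hC1 um α β αC1 βC1
end
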